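/- Let E : ℝⁿ → ℝ be twice continuously differentiable with gradient g, and let U ⊆ ℝⁿ be an open corridor for E. For θ ∈ U with the segment {θ - s • g(θ) : s ∈ [0, t]} contained in U, the lift of the line of steepest descent to the loss surface, t ↦ (θ - t • g(θ), E(θ - t • g(θ))) ∈ ℝⁿ × ℝ, is a straight line: it equals t ↦ (θ, E(θ)) + t • (-g(θ), -‖g(θ)‖²). -/

import Mathlib

/-! In a corridor the gradient-flow solution through a point `x`, which exists locally by
Picard–Lindelöf, is a line; its velocity `-∇E` is therefore constant along it and equals
`-∇E x`, so `∇E` is constant on a neighbourhood of `x` in the line of steepest descent.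
Connectedness of `[0, t]` spreads this over the whole segment, along which `E` then decreases
at the constant rate `‖∇E θ‖²`. -/

/-- An open set `U ⊆ ℝⁿ` is a *corridor* for `E` if every solution of the gradient flow
`θ'(t) = -∇E(θ(t))` whose image lies in `U` is a straight line traveled at constant speed,
i.e. satisfies `θ(t) = θ(a) + (t - a) • v` for some fixed vector `v`. -/
def IsCorridor {n : ℕ} (E : EuclideanSpace ℝ (Fin n) → ℝ)
    (U : Set (EuclideanSpace ℝ (Fin n))) : Prop :=
  ∀ (a b : ℝ), a ≤ b → ∀ θ : ℝ → EuclideanSpace ℝ (Fin n),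
    (∀ t ∈ Set.Icc a b, HasDerivAt θ (-(gradient E (θ t))) t) →
    (∀ t ∈ Set.Icc a b, θ t ∈ U) →
    ∃ v : EuclideanSpace ℝ (Fin n), ∀ t ∈ Set.Icc a b, θ t = θ a + (t - a) • v

open Set Filter Topology InnerProductSpace

section InnerProductSpace

variable {F : Type*} [NormedAddCommGroup F] [InnerProductSpace ℝ F] [CompleteSpace F]

theorem ContDiff.gradient {f : F → ℝ} {m n : WithTop ℕ∞} (hf : ContDiff ℝ n f)
    (hmn : m + 1 ≤ n) : ContDiff ℝ m (gradient f) :=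
  (toDual ℝ F).symm.contDiff.comp (hf.fderiv_right hmn)

theorem hasDerivAt_comp_sub_smul {f : F → ℝ} {x v : F} {s : ℝ}
    (hf : DifferentiableAt ℝ f (x - s • v)) :
    HasDerivAt (fun u : ℝ => f (x - u • v)) (-⟪gradient f (x - s • v), v⟫_ℝ) s := by
  have hline : HasDerivAt (fun u : ℝ => x - u • v) (-v) s := by
    simpa using ((hasDerivAt_id s).smul_const v).const_sub x
  have hcomp := hf.hasGradientAt.hasFDerivAt.comp_hasDerivAt s hline
  rwa [toDual_apply_apply, inner_neg_right] at hcomp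

theorem apply_sub_smul_eq_of_gradient_eq {f : F → ℝ} (hf : Differentiable ℝ f) {x v g : F}
    {t : ℝ} (hgrad : ∀ s ∈ Icc 0 t, gradient f (x - s • v) = g) :
    ∀ s ∈ Icc 0 t, f (x - s • v) = f x - s * ⟪g, v⟫_ℝ := by
  have hconst := constant_of_has_deriv_right_zero (a := 0) (b := t)
    (f := fun s => f (x - s • v) + s * ⟪g, v⟫_ℝ)
    ((hf.continuous.comp (by fun_prop)).add (by fun_prop)).continuousOn fun s hs => by
      have hderiv := (hasDerivAt_comp_sub_smul (hf (x - s • v))).add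
        ((hasDerivAt_id s).mul_const ⟪g, v⟫_ℝ)
      rw [hgrad s (Ico_subset_Icc_self hs)] at hderiv
      exact (hderiv.congr_deriv (by simp)).hasDerivWithinAt
  intro s hs
  have := hconst s hs
  simp only [zero_smul, sub_zero, zero_mul, add_zero] at this
  linarith

end InnerProductSpace

theorem hasDerivAt_of_eqOn_Icc_add_smul {F : Type*} [NormedAddCommGroup F] [NormedSpace ℝ F]
    {f : ℝ → F} {a b t : ℝ} {v : F} (hf : ∀ u ∈ Icc a b, f u = f a + (u - a) • v)
    (ht : t ∈ Ioo a b) : HasDerivAt f v t := by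
  have hline : HasDerivAt (fun u : ℝ => f a + (u - a) • v) v t := by
    simpa using (((hasDerivAt_id t).sub_const a).smul_const v).const_add (f a)
  exact hline.congr_of_eventuallyEq <| eventually_of_mem (Ioo_mem_nhds ht.1 ht.2)
    fun u hu => hf u (Ioo_subset_Icc_self hu)

namespace IsCorridor

variable {n : ℕ} {E : EuclideanSpace ℝ (Fin n) → ℝ} {U : Set (EuclideanSpace ℝ (Fin n))}

theorem eventually_gradient_sub_smul_eq (hE : ContDiff ℝ 2 E) (hU : IsOpen U)
    (hcor : IsCorridor E U) {x : EuclideanSpace ℝ (Fin n)} (hx : x ∈ U) :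
    ∀ᶠ u in 𝓝 (0 : ℝ), gradient E (x - u • gradient E x) = gradient E x := by
  have hfield : ContDiff ℝ 1 fun y => -gradient E y := (hE.gradient (m := 1) (by norm_num)).neg
  obtain ⟨f, hf0, ε, hε, hflow⟩ := hfield.contDiffAt
    |>.exists_forall_mem_closedBall_exists_eq_forall_mem_Ioo_hasDerivAt₀ (x₀ := x) 0
  have hfU : ∀ᶠ u in 𝓝 (0 : ℝ), f u ∈ U ∧ u ∈ Ioo (0 - ε) (0 + ε) :=
    ((hflow 0 (by simpa using hε)).continuousAt.eventually_mem (hU.mem_nhds (hf0 ▸ hx))).and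
      (Ioo_mem_nhds (by linarith) (by linarith))
  obtain ⟨δ, hδ, hball⟩ := Metric.nhds_basis_closedBall.mem_iff.1 hfU
  rw [Real.closedBall_eq_Icc, zero_sub, zero_add] at hball
  obtain ⟨v, hv⟩ := hcor (-δ) δ (by linarith) f (fun u hu => hflow u (hball hu).2)
    fun u hu => (hball hu).1
  have hvel : ∀ u ∈ Ioo (-δ) δ, -gradient E (f u) = v := fun u hu =>
    (hflow u (hball (Ioo_subset_Icc_self hu)).2).unique (hasDerivAt_of_eqOn_Icc_add_smul hv hu)
  have h0 : (0 : ℝ) ∈ Ioo (-δ) δ := ⟨by linarith, hδ⟩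
  have hv0 : v = -gradient E x := by rw [← hvel 0 h0, hf0]
  filter_upwards [Ioo_mem_nhds h0.1 h0.2] with u hu
  have hline : f u = f 0 + u • v := by
    rw [hv u (Ioo_subset_Icc_self hu), hv 0 (Ioo_subset_Icc_self h0)]
    module
  have hfu : f u = x - u • gradient E x := by
    rw [hline, hf0, hv0]
    module
  rw [← hfu, ← neg_neg (gradient E (f u)), hvel u hu, hv0, neg_neg]

theorem gradient_sub_smul_eq (hE : ContDiff ℝ 2 E) (hU : IsOpen U) (hcor : IsCorridor E U)
    {θ : EuclideanSpace ℝ (Fin n)} {t : ℝ}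
    (hseg : ∀ s ∈ Icc (0 : ℝ) t, θ - s • gradient E θ ∈ U) :
    ∀ s ∈ Icc (0 : ℝ) t, gradient E (θ - s • gradient E θ) = gradient E θ := by
  set g := gradient E θ
  let S := {s : ℝ | gradient E (θ - s • g) = g}
  have hclosed : IsClosed (S ∩ Icc 0 t) :=
    (isClosed_eq ((hE.gradient (m := 1) (by norm_num)).continuous.comp (by fun_prop))
      continuous_const).inter isClosed_Icc
  have hS0 : (0 : ℝ) ∈ S := by simp [S, g]
  refine IsClosed.Icc_subset_of_forall_mem_nhdsWithin hclosed hS0 ?_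
  rintro s ⟨hs, hsIco⟩
  have hlocal := hcor.eventually_gradient_sub_smul_eq hE hU (hseg s (Ico_subset_Icc_self hsIco))
  rw [hs] at hlocal
  have hshift : Tendsto (fun u => u - s) (𝓝 s) (𝓝 0) := by
    simpa using (continuous_sub_right s).tendsto s
  refine nhdsWithin_le_nhds ((hshift.eventually hlocal).mono fun u hu => ?_)
  simpa [S, show θ - s • g - (u - s) • g = θ - u • g by module] using hu

end IsCorridor

theorem steepest_descent_lifts_to_line_on_loss_surface_general {n : ℕ}
    (E : EuclideanSpace ℝ (Fin n) → ℝ) (hE : ContDiff ℝ 2 E)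
    (U : Set (EuclideanSpace ℝ (Fin n))) (hU : IsOpen U) (hcor : IsCorridor E U)
    (θ : EuclideanSpace ℝ (Fin n))
    (t : ℝ)
    (hseg : ∀ s ∈ Set.Icc (0 : ℝ) t, θ - s • gradient E θ ∈ U) :
    ∀ s ∈ Set.Icc (0 : ℝ) t,
      ((θ - s • gradient E θ, E (θ - s • gradient E θ)) :
          EuclideanSpace ℝ (Fin n) × ℝ) =
        (θ, E θ) + s • (-(gradient E θ), -‖gradient E θ‖ ^ 2) := by
  intro s hs
  have hvalue := apply_sub_smul_eq_of_gradient_eq (hE.differentiable (by norm_num))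
    (hcor.gradient_sub_smul_eq hE hU hseg) s hs
  rw [real_inner_self_eq_norm_sq] at hvalue
  ext1
  · simp only [Prod.fst_add, Prod.smul_fst]
    module
  · simp only [Prod.snd_add, Prod.smul_snd, smul_eq_mul, hvalue]
    ring

/-- **The steepest descent line lifts to a line on the loss surface,
Proposition 2.7.** Let `U` be an open corridor for `E` with gradient `g`. For `θ ∈ U` with
the segment `{θ - s • g(θ) : s ∈ [0, t]}` contained in `U`, the lift of the line of
steepest descent to the loss surface, `s ↦ (θ - s • g(θ), E(θ - s • g(θ))) ∈ ℝⁿ × ℝ`, is a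
straight line: it equals `s ↦ (θ, E(θ)) + s • (-g(θ), -‖g(θ)‖²)`. -/
theorem steepest_descent_lifts_to_line_on_loss_surface {n : ℕ}
    (E : EuclideanSpace ℝ (Fin n) → ℝ) (hE : ContDiff ℝ 2 E)
    (U : Set (EuclideanSpace ℝ (Fin n))) (hU : IsOpen U) (hcor : IsCorridor E U)
    (θ : EuclideanSpace ℝ (Fin n)) (hθ : θ ∈ U)
    (t : ℝ) (ht : 0 ≤ t)
    (hseg : ∀ s ∈ Set.Icc (0 : ℝ) t, θ - s • gradient E θ ∈ U) :
    ∀ s ∈ Set.Icc (0 : ℝ) t,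
      ((θ - s • gradient E θ, E (θ - s • gradient E θ)) :
          EuclideanSpace ℝ (Fin n) × ℝ) =
        (θ, E θ) + s • (-(gradient E θ), -‖gradient E θ‖ ^ 2) :=
  steepest_descent_lifts_to_line_on_loss_surface_general E hE U hU hcor θ t hseg
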